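/- Let t: G∘G ⟹ G∘G satisfy the QYBE and define t⁽ⁿ⁾ inductively as before. Then for all l ≥ 2 and p ≥ 1: Gᵖ((t⁽ˡ⁻¹⁾)_G) ∘ t⁽ᵖ⁺ˡ⁾ = t⁽ᵖ⁺ˡ⁾ ∘ Gᵖ⁻¹((t⁽ˡ⁻¹⁾)_{G²}). -/

import Mathlib

/-!
Write `σᵢ = Gⁱ(t_{Gⁿ⁻ⁱ⁻²})` for the endomorphisms of `Gⁿ M` (`i + 2 ≤ n`). Naturality of `t` makes
`σᵢ` and `σⱼ` commute when `i + 2 ≤ j`, and the QYBE, pushed through `Gⁱ`, is the braid relation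
`σᵢ σᵢ₊₁ σᵢ = σᵢ₊₁ σᵢ σᵢ₊₁`. In the monoid `End (Gⁿ M)`, where `f * g = g ≫ f`, `t⁽ᵏ⁺¹⁾` is the
product `σ₀ σ₁ ⋯ σₖ` and `Gᵖ(t⁽ˡ⁺¹⁾_{G^q})` is `σₚ σₚ₊₁ ⋯ σₚ₊ₗ`. In any monoid the braid relations
give `σₐ₊₁ (σ₀ ⋯ σₘ) = (σ₀ ⋯ σₘ) σₐ` for `a < m`; applied letter by letter to `σₚ₊₁ ⋯ σₚ₊ₗ₊₁`
this is the theorem.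
-/
open CategoryTheory

variable {A : Type*} [Category A]

/-- `gpow G n M` is the `n`-th power `Gⁿ M` of the endofunctor `G` applied to `M`. -/
def gpow (Gf : A ⥤ A) : ℕ → A → A
  | 0, M => M
  | n+1, M => gpow Gf n (Gf.obj M)

/-- `gmap G n f = Gⁿ(f)`. -/
def gmap (Gf : A ⥤ A) : (n : ℕ) → {X Y : A} → (X ⟶ Y) → (gpow Gf n X ⟶ gpow Gf n Y)
  | 0, _, _, f => f
  | n+1, _, _, f => gmap Gf n (Gf.map f)

lemma gpow_succ_out (Gf : A ⥤ A) : ∀ (n : ℕ) (M : A), gpow Gf (n+1) M = Gf.obj (gpow Gf n M)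
  | 0, _ => rfl
  | n+1, M => gpow_succ_out Gf n (Gf.obj M)

lemma gpow_add (Gf : A ⥤ A) : ∀ (a b : ℕ) (M : A), gpow Gf a (gpow Gf b M) = gpow Gf (a + b) M
  | a, 0, M => rfl
  | a, b+1, M => by
      rw [Nat.add_succ]
      exact gpow_add Gf a b (Gf.obj M)

lemma gpow_add' (Gf : A ⥤ A) (a b c : ℕ) (h : a + b = c) (M : A) :
    gpow Gf a (gpow Gf b M) = gpow Gf c M := by subst h; exact gpow_add Gf a b M

/-- `tpow G t n` is the component family of `t⁽ⁿ⁺¹⁾`, where `t⁽¹⁾ = t` and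
`t⁽ⁿ⁺¹⁾ = (t⁽ⁿ⁾)_G ∘ Gⁿ(t)`. -/
def tpow (Gf : A ⥤ A) (t : Gf ⋙ Gf ⟶ Gf ⋙ Gf) :
    (n : ℕ) → (M : A) → (gpow Gf (n+2) M ⟶ gpow Gf (n+2) M)
  | 0, M => t.app M
  | n+1, M => gmap Gf (n+1) (t.app M) ≫ tpow Gf t n (Gf.obj M)

section BraidMonoid

variable {S : Type*} [Monoid S]

def ascendingProd (s : ℕ → S) (i : ℕ) : ℕ → S
  | 0 => s i
  | len + 1 => ascendingProd s i len * s (i + len + 1)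

structure BraidRelations (s : ℕ → S) (m : ℕ) : Prop where
  commute : ∀ i j, i + 2 ≤ j → j ≤ m → Commute (s i) (s j)
  braid : ∀ i, i + 1 ≤ m → s i * s (i + 1) * s i = s (i + 1) * s i * s (i + 1)

variable {s : ℕ → S}

theorem ascendingProd_congr {s' : ℕ → S} {i len : ℕ} (h : ∀ k ≤ len, s (i + k) = s' (i + k)) :
    ascendingProd s i len = ascendingProd s' i len := by
  induction len with
  | zero => exact h 0 le_rfl
  | succ len ih =>
    rw [ascendingProd, ascendingProd, ih fun k hk => h k (by omega)]
    exact congrArg _ (h (len + 1) le_rfl)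

theorem commute_ascendingProd_left {x : S} {i len : ℕ} (h : ∀ k ≤ len, Commute (s (i + k)) x) :
    Commute (ascendingProd s i len) x := by
  induction len with
  | zero => exact h 0 le_rfl
  | succ len ih => exact (ih fun k hk => h k (by omega)).mul_left (h (len + 1) le_rfl)

namespace BraidRelations

variable {m : ℕ}

theorem mono (hs : BraidRelations s m) {m' : ℕ} (h : m' ≤ m) : BraidRelations s m' :=
  ⟨fun i j hij hj => hs.commute i j hij (hj.trans h), fun i hi => hs.braid i (hi.trans h)⟩

theorem mul_ascendingProd_zero (hs : BraidRelations s m) {a : ℕ} (ha : a < m) :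
    s (a + 1) * ascendingProd s 0 m = ascendingProd s 0 m * s a := by
  induction m with
  | zero => omega
  | succ m ih =>
    rcases Nat.lt_or_ge a m with ham | ham
    · have hc : Commute (s a) (s (0 + m + 1)) := hs.commute a _ (by omega) (by omega)
      rw [ascendingProd, ← mul_assoc, ih (hs.mono m.le_succ) ham, mul_assoc, hc.eq, mul_assoc]
    · obtain rfl : a = m := by omega
      cases a with
      | zero => simpa only [ascendingProd, mul_assoc] using (hs.braid 0 le_rfl).symm
      | succ b =>
        have hc : Commute (s (b + 2)) (ascendingProd s 0 b) :=
          (commute_ascendingProd_left fun k hk => hs.commute _ _ (by omega) (by omega)).symm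
        simp only [ascendingProd, zero_add]
        calc s (b + 2) * (ascendingProd s 0 b * s (b + 1) * s (b + 2))
            = ascendingProd s 0 b * (s (b + 2) * s (b + 1) * s (b + 2)) := by
              simp only [mul_assoc, hc.left_comm]
          _ = ascendingProd s 0 b * (s (b + 1) * s (b + 2) * s (b + 1)) := by
              rw [hs.braid (b + 1) le_rfl]
          _ = ascendingProd s 0 b * s (b + 1) * s (b + 2) * s (b + 1) := by
              simp only [mul_assoc]

theorem ascendingProd_succ_mul (hs : BraidRelations s m) {i len : ℕ} (h : i + len < m) :
    ascendingProd s (i + 1) len * ascendingProd s 0 m =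
      ascendingProd s 0 m * ascendingProd s i len := by
  induction len with
  | zero => exact hs.mul_ascendingProd_zero (by omega)
  | succ len ih =>
    rw [ascendingProd, ascendingProd, mul_assoc, show i + 1 + len + 1 = i + len + 1 + 1 by omega,
      hs.mul_ascendingProd_zero (by omega), ← mul_assoc, ih (by omega), mul_assoc]

end BraidRelations

end BraidMonoid

section Iterates

variable (Gf : A ⥤ A)

theorem gmap_id : ∀ (n : ℕ) (X : A), gmap Gf n (𝟙 X) = 𝟙 (gpow Gf n X)
  | 0, _ => rfl
  | n + 1, X => by
    change gmap Gf n (Gf.map (𝟙 X)) = _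
    rw [Gf.map_id, gmap_id n]
    rfl

theorem gmap_comp : ∀ (n : ℕ) {X Y Z : A} (f : X ⟶ Y) (g : Y ⟶ Z),
    gmap Gf n (f ≫ g) = gmap Gf n f ≫ gmap Gf n g
  | 0, _, _, _, _, _ => rfl
  | n + 1, _, _, _, f, g => by
    change gmap Gf n (Gf.map (f ≫ g)) = _
    rw [Gf.map_comp, gmap_comp n]
    rfl

def gpowFunctor (n : ℕ) : A ⥤ A where
  obj := gpow Gf n
  map := gmap Gf n
  map_id := gmap_id Gf n
  map_comp := gmap_comp Gf n

theorem gmap_add (a : ℕ) : ∀ (b : ℕ) {X : A} (f : End X),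
    gmap Gf (a + b) f = (eqToIso (gpow_add Gf a b X)).conj (gmap Gf a (gmap Gf b f))
  | 0, _, _ => (Iso.refl_conj _).symm
  | b + 1, _, f => gmap_add a b (Gf.map f)

theorem gpow_obj_obj_gpow {i j n : ℕ} (h : i + 2 + j = n) (M : A) :
    gpow Gf i (Gf.obj (Gf.obj (gpow Gf j M))) = gpow Gf n M := by
  change gpow Gf i (gpow Gf 2 (gpow Gf j M)) = _
  rw [gpow_add Gf 2 j, gpow_add]
  congr 1
  omega

end Iterates

theorem conj_eqToIso_conj_eqToIso {C : Type*} [Category C] {X Y Z : C} (e : X = Y) (e' : Y = Z)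
    (f : End X) : (eqToIso e').conj ((eqToIso e).conj f) = (eqToIso (e.trans e')).conj f := by
  rw [← Iso.trans_conj, eqToIso_trans]

section Braiding

variable (Gf : A ⥤ A) (t : Gf ⋙ Gf ⟶ Gf ⋙ Gf)

/-- `braidGen Gf t n M i` is `σᵢ = Gⁱ(t_{Gⁿ⁻ⁱ⁻²})` on `Gⁿ M`, transported along
`Gⁱ G² Gⁿ⁻ⁱ⁻² M = Gⁿ M`; it is `1` when `n < i + 2`. -/
def braidGen (n : ℕ) (M : A) (i : ℕ) : End (gpow Gf n M) :=
  if h : i + 2 ≤ n then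
    (eqToIso (gpow_obj_obj_gpow Gf (show i + 2 + (n - (i + 2)) = n by omega) M)).conj
      (gmap Gf i (t.app (gpow Gf (n - (i + 2)) M)))
  else 1

theorem braidGen_eq {n i j : ℕ} (h : i + 2 + j = n) {M N : A} (hN : N = gpow Gf j M)
    (e : gpow Gf i (Gf.obj (Gf.obj N)) = gpow Gf n M) :
    braidGen Gf t n M i = (eqToIso e).conj (gmap Gf i (t.app N)) := by
  subst hN
  obtain rfl : j = n - (i + 2) := by omega
  rw [braidGen, dif_pos (by omega)]

theorem braidGen_succ {n i : ℕ} (hi : i + 2 ≤ n) (M : A) :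
    braidGen Gf t (n + 1) M i = braidGen Gf t n (Gf.obj M) i := by
  obtain ⟨j, rfl⟩ : ∃ j, n = i + 2 + j := ⟨n - (i + 2), by omega⟩
  rw [braidGen_eq Gf t (j := j + 1) (N := gpow Gf j (Gf.obj M)) (by omega) rfl
    (gpow_obj_obj_gpow Gf (by omega) _), braidGen_eq Gf t rfl rfl (gpow_obj_obj_gpow Gf rfl _)]
  rfl

theorem braidRelations_braidGen
    (hqybe : ∀ M : A, Gf.map (t.app M) ≫ t.app (Gf.obj M) ≫ Gf.map (t.app M) =
      t.app (Gf.obj M) ≫ Gf.map (t.app M) ≫ t.app (Gf.obj M))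
    (m : ℕ) (M : A) : BraidRelations (braidGen Gf t (m + 2) M) m where
  commute i k hik hk := by
    obtain ⟨d, rfl⟩ : ∃ d, k = i + 2 + d := ⟨k - (i + 2), by omega⟩
    obtain ⟨j, rfl⟩ : ∃ j, m = i + 2 + d + j := ⟨m - (i + 2 + d), by omega⟩
    have E : gpow Gf (i + 2) (gpow Gf d (Gf.obj (Gf.obj (gpow Gf j M)))) =
        gpow Gf (i + 2 + d + j + 2) M :=
      (gpow_add Gf (i + 2) d _).trans (gpow_obj_obj_gpow Gf (by omega) M)
    rw [braidGen_eq Gf t (i := i) (j := d + 2 + j) (by omega) (gpow_obj_obj_gpow Gf rfl M) E,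
      braidGen_eq Gf t (i := i + 2 + d) (j := j) (by omega) rfl
        (gpow_obj_obj_gpow Gf (by omega) M),
      gmap_add, conj_eqToIso_conj_eqToIso]
    have hnat : Commute (S := End ((Gf ⋙ Gf).obj (gpow Gf d (Gf.obj (Gf.obj (gpow Gf j M))))))
        (t.app _) ((Gf ⋙ Gf).map (gmap Gf d (t.app (gpow Gf j M)))) :=
      t.naturality _
    exact (hnat.map ((gpowFunctor Gf i).mapEnd _)).map (eqToIso E).conj
  braid i hi := by
    obtain ⟨j, rfl⟩ : ∃ j, m = i + 1 + j := ⟨m - (i + 1), by omega⟩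
    have E : gpow Gf i (Gf.obj (Gf.obj (Gf.obj (gpow Gf j M)))) = gpow Gf (i + 1 + j + 2) M :=
      gpow_obj_obj_gpow Gf (i := i + 1) (by omega) M
    rw [braidGen_eq Gf t (by omega) (gpow_succ_out Gf j M).symm E,
      braidGen_eq Gf t (i := i + 1) (by omega) rfl E]
    set X := gpow Gf j M
    let φ := (eqToIso E).conj.toMonoidHom.comp
      ((gpowFunctor Gf i).mapEnd (X := Gf.obj (Gf.obj (Gf.obj X))))
    change φ (t.app (Gf.obj X)) * φ (Gf.map (t.app X)) * φ (t.app (Gf.obj X)) =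
      φ (Gf.map (t.app X)) * φ (t.app (Gf.obj X)) * φ (Gf.map (t.app X))
    simp only [← map_mul]
    congr 1
    simpa only [End.mul_def, Category.assoc] using (hqybe X).symm

theorem tpow_eq_ascendingProd :
    ∀ (k : ℕ) (M : A), tpow Gf t k M = ascendingProd (braidGen Gf t (k + 2) M) 0 k
  | 0, M =>
    ((braidGen_eq Gf t (n := 0 + 2) (i := 0) (j := 0) rfl rfl rfl).trans (Iso.refl_conj _)).symm
  | k + 1, M => by
    have hinit : ascendingProd (braidGen Gf t (k + 1 + 2) M) 0 k = tpow Gf t k (Gf.obj M) :=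
      (ascendingProd_congr fun i hi => braidGen_succ Gf t (by omega) M).trans
        (tpow_eq_ascendingProd k _).symm
    have hlast : braidGen Gf t (k + 1 + 2) M (k + 1) = gmap Gf (k + 1) (t.app M) :=
      (braidGen_eq Gf t (i := k + 1) (j := 0) rfl rfl rfl).trans (Iso.refl_conj _)
    rw [ascendingProd, zero_add, hinit, hlast]
    rfl

theorem conj_gmap_tpow_eq_ascendingProd {p l q n : ℕ} (h : p + l + 2 + q = n) {M N : A}
    (hN : N = gpow Gf q M) (e : gpow Gf p (gpow Gf (l + 2) N) = gpow Gf n M) :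
    (eqToIso e).conj (gmap Gf p (tpow Gf t l N)) = ascendingProd (braidGen Gf t n M) p l := by
  induction l generalizing q N with
  | zero => exact (braidGen_eq Gf t (by omega) hN e).symm
  | succ l ih =>
    have hinit : ascendingProd (braidGen Gf t n M) p l =
        (eqToIso e).conj (gmap Gf p (tpow Gf t l (Gf.obj N))) :=
      (ih (q := q + 1) (by omega) (by rw [hN, gpow_succ_out]) e).symm
    have hlast : braidGen Gf t n M (p + l + 1) =
        (eqToIso e).conj (gmap Gf p (gmap Gf (l + 1) (t.app N))) :=
      (braidGen_eq Gf t (i := p + (l + 1)) (by omega) hN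
        ((gpow_add Gf p (l + 1) _).symm.trans e)).trans
        (by rw [gmap_add, conj_eqToIso_conj_eqToIso]; rfl)
    rw [ascendingProd, hinit, hlast, End.mul_def]
    exact (congrArg (eqToIso e).conj (gmap_comp Gf p _ _)).trans (Iso.conj_comp _ _ _)

end Braiding

/-- Here `l = l' + 2` and `p = p' + 1`. -/
theorem tpow_braid_general (Gf : A ⥤ A) (t : Gf ⋙ Gf ⟶ Gf ⋙ Gf)
    (hqybe : ∀ M : A, Gf.map (t.app M) ≫ t.app (Gf.obj M) ≫ Gf.map (t.app M) =
      t.app (Gf.obj M) ≫ Gf.map (t.app M) ≫ t.app (Gf.obj M))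
    (p' l' : ℕ) (M : A) :
    tpow Gf t (p' + l' + 2) M ≫
        eqToHom (show gpow Gf (p'+l'+4) M = gpow Gf (p'+1) (gpow Gf (l'+2) (Gf.obj M)) from
          (gpow_add' Gf (p'+1) (l'+2) (p'+l'+3) (by omega) (Gf.obj M)).symm) ≫
        gmap Gf (p'+1) (tpow Gf t l' (Gf.obj M)) ≫
        eqToHom (show gpow Gf (p'+1) (gpow Gf (l'+2) (Gf.obj M)) = gpow Gf (p'+l'+4) M from
          gpow_add' Gf (p'+1) (l'+2) (p'+l'+3) (by omega) (Gf.obj M)) =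
      (eqToHom (show gpow Gf (p'+l'+4) M = gpow Gf p' (gpow Gf (l'+2) (Gf.obj (Gf.obj M))) from
          (gpow_add' Gf p' (l'+2) (p'+l'+2) (by omega) (Gf.obj (Gf.obj M))).symm) ≫
        gmap Gf p' (tpow Gf t l' (Gf.obj (Gf.obj M))) ≫
        eqToHom (show gpow Gf p' (gpow Gf (l'+2) (Gf.obj (Gf.obj M))) = gpow Gf (p'+l'+4) M from
          gpow_add' Gf p' (l'+2) (p'+l'+2) (by omega) (Gf.obj (Gf.obj M)))) ≫
      tpow Gf t (p' + l' + 2) M := by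
  have key := (braidRelations_braidGen Gf t hqybe (p' + l' + 2) M).ascendingProd_succ_mul
    (i := p') (len := l') (by omega)
  rw [← tpow_eq_ascendingProd,
    ← conj_gmap_tpow_eq_ascendingProd Gf t (l := l') (q := 1) (by omega) rfl
      (gpow_add' Gf (p' + 1) (l' + 2) (p' + l' + 3) (by omega) (Gf.obj M)),
    ← conj_gmap_tpow_eq_ascendingProd Gf t (l := l') (q := 2) (by omega) rfl
      (gpow_add' Gf p' (l' + 2) (p' + l' + 2) (by omega) (Gf.obj (Gf.obj M)))] at key
  exact key
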